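/- In the synchronous FL round, if some client m satisfies T_m < T = max_k T_k and the PS lowers α_m so that client m's best-response time increases to exactly T, then the PS's payment term α_m(T₀ − T_m) strictly decreases while T is unchanged; hence at the PS's optimum, T_m = T for all selected clients (absent frequency caps). -/

import Mathlib

open Finset Function Set

theorem strictAntiOn_mul_sub_div_sub_pow {C c T₀ : ℝ} (hC : 0 < C) (p : ℕ) :
    StrictAntiOn (fun x => C * (T₀ - x) / (x - c) ^ p) (Ioc c T₀) := by
  intro x ⟨hcx, hxT₀⟩ y _ hxy
  apply div_lt_div₀
  · nlinarith
  · exact pow_le_pow_left₀ (by linarith) (by linarith) p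
  · nlinarith
  · exact pow_pos (by linarith) p

theorem Finset.sup'_update_eq_of_le {ι α : Type*} [DecidableEq ι] [LinearOrder α]
    {s : Finset ι} (H : s.Nonempty) (f : ι → α) {m : ι} {b : α}
    (hmb : f m ≤ b) (hb : b ≤ s.sup' H f) : s.sup' H (update f m b) = s.sup' H f := by
  refine le_antisymm (sup'_le H _ fun i hi => ?_) (sup'_mono_fun fun i _ => ?_)
  · rcases eq_or_ne i m with rfl | him
    · rwa [update_self]
    · rw [update_of_ne him]
      exact le_sup' f hi
  · exact le_update_self_iff.2 hmb i

theorem Finset.sum_update_lt {ι α M : Type*} [Fintype ι] [DecidableEq ι]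
    [AddCommMonoid M] [PartialOrder M] [IsOrderedCancelAddMonoid M]
    (g : ι → α → M) (x : ι → α) {k : ι} {b : α} (h : g k b < g k (x k)) :
    ∑ j, g j (update x k b j) < ∑ j, g j (x j) := by
  refine sum_lt_sum (fun j _ => ?_) ⟨k, mem_univ k, by rwa [update_self]⟩
  rcases eq_or_ne j k with rfl | hjk
  · rw [update_self]; exact h.le
  · rw [update_of_ne hjk]

theorem stmt_13_general (n : ℕ) [NeZero n] (β v a Tcom : Fin n → ℝ) (T₀ μ : ℝ)
    (hβ : ∀ k, 0 < β k) (hv : ∀ k, 0 < v k) (ha : ∀ k, 0 < a k) :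
    let R : Fin n → ℝ → ℝ := fun k x => 2 * β k * v k * (a k) ^ 3 * (T₀ - x) / (x - Tcom k) ^ 3
    let sup : (Fin n → ℝ) → ℝ := fun Tv => Finset.univ.sup' Finset.univ_nonempty Tv
    let obj : (Fin n → ℝ) → ℝ := fun Tv => (∑ k, R k (Tv k)) + μ * sup Tv
    (∀ Tv : Fin n → ℝ, (∀ k, Tv k ∈ Set.Ioo (Tcom k) T₀) →
      ∀ m, Tv m < sup Tv →
        R m (sup Tv) < R m (Tv m) ∧
          sup (Function.update Tv m (sup Tv)) = sup Tv) ∧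
    (∀ Tv : Fin n → ℝ, (∀ k, Tv k ∈ Set.Ioo (Tcom k) T₀) →
      (∀ Tv' : Fin n → ℝ, (∀ k, Tv' k ∈ Set.Ioo (Tcom k) T₀) → obj Tv ≤ obj Tv') →
      ∀ k, Tv k = sup Tv) := by
  intro R sup obj
  have hR : ∀ k, StrictAntiOn (R k) (Ioc (Tcom k) T₀) := fun k =>
    strictAntiOn_mul_sub_div_sub_pow (by have := hβ k; have := hv k; have := ha k; positivity) 3
  have hsup_lt : ∀ Tv : Fin n → ℝ, (∀ k, Tv k ∈ Ioo (Tcom k) T₀) → sup Tv < T₀ :=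
    fun Tv hTv => (sup'_lt_iff _).2 fun k _ => (hTv k).2
  have improve : ∀ Tv : Fin n → ℝ, (∀ k, Tv k ∈ Ioo (Tcom k) T₀) → ∀ m, Tv m < sup Tv →
      R m (sup Tv) < R m (Tv m) ∧ sup (update Tv m (sup Tv)) = sup Tv :=
    fun Tv hTv m hm =>
      ⟨hR m ⟨(hTv m).1, (hTv m).2.le⟩ ⟨(hTv m).1.trans hm, (hsup_lt Tv hTv).le⟩ hm,
        sup'_update_eq_of_le _ Tv hm.le le_rfl⟩
  refine ⟨improve, fun Tv hTv hmin k => ?_⟩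
  by_contra hne
  have hk : Tv k < sup Tv := lt_of_le_of_ne (le_sup' Tv (mem_univ k)) hne
  obtain ⟨hRk, hsup⟩ := improve Tv hTv k hk
  have hfeas : ∀ j, update Tv k (sup Tv) j ∈ Ioo (Tcom j) T₀ :=
    (forall_update_iff Tv fun j t => t ∈ Ioo (Tcom j) T₀).2
      ⟨⟨(hTv k).1.trans hk, hsup_lt Tv hTv⟩, fun j _ => hTv j⟩
  have hle := hmin _ hfeas
  have hsum := sum_update_lt R Tv hRk
  simp only [obj, hsup] at hle
  linarith

/-- In a synchronous round with `T = max_k T_k` and payments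
`R_k(T_k) = 2β_k v_k a_k³(T₀ − T_k)/(T_k − T_com_k)³`: raising any `T_m < T` up to `T`
strictly decreases `R_m` and leaves the maximum unchanged; consequently any feasible
configuration minimizing `Σ_k R_k(T_k) + μ·max_k T_k` has `T_k = max_j T_j` for all `k`. -/
theorem stmt_13 (n : ℕ) [NeZero n] (β v a Tcom : Fin n → ℝ) (T₀ μ : ℝ)
    (hβ : ∀ k, 0 < β k) (hv : ∀ k, 0 < v k) (ha : ∀ k, 0 < a k)
    (hTcom : ∀ k, 0 < Tcom k) (hT₀ : ∀ k, Tcom k < T₀) (hμ : 0 < μ) :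
    let R : Fin n → ℝ → ℝ := fun k x => 2 * β k * v k * (a k) ^ 3 * (T₀ - x) / (x - Tcom k) ^ 3
    let sup : (Fin n → ℝ) → ℝ := fun Tv => Finset.univ.sup' Finset.univ_nonempty Tv
    let obj : (Fin n → ℝ) → ℝ := fun Tv => (∑ k, R k (Tv k)) + μ * sup Tv
    (∀ Tv : Fin n → ℝ, (∀ k, Tv k ∈ Set.Ioo (Tcom k) T₀) →
      ∀ m, Tv m < sup Tv →
        R m (sup Tv) < R m (Tv m) ∧
          sup (Function.update Tv m (sup Tv)) = sup Tv) ∧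
    (∀ Tv : Fin n → ℝ, (∀ k, Tv k ∈ Set.Ioo (Tcom k) T₀) →
      (∀ Tv' : Fin n → ℝ, (∀ k, Tv' k ∈ Set.Ioo (Tcom k) T₀) → obj Tv ≤ obj Tv') →
      ∀ k, Tv k = sup Tv) :=
  stmt_13_general n β v a Tcom T₀ μ hβ hv ha
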